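/- (Metric feasibility of the bounded-gap construction.) Let s ≥ 2 be an integer, n = s², P = {0,…,s−1}² ⊆ ℤ², and A = P \ {(0,0), (s−1,s−1)}. Let V be the disjoint union of A and two new elements u₀, v₀. Define dist on V by: dist(x,y) = ‖x − y‖₂ for x, y ∈ A; dist(x, z) = √(2n) for x ∈ A and z ∈ {u₀, v₀}; dist(u₀, v₀) = 1; and dist(x,x) = 0 for all x. Then dist is a metric on V, and dist satisfies the 2-dimensional spreading constraints. -/

import Mathlib

open scoped BigOperators

/-- Euclidean distance between two points of the integer lattice `ℤ²`. -/
noncomputable def eDist2 (p q : ℤ × ℤ) : ℝ :=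
  Real.sqrt (((p.1 : ℝ) - (q.1 : ℝ)) ^ 2 + ((p.2 : ℝ) - (q.2 : ℝ)) ^ 2)

/-- `dist` is a metric on `V`. -/
def IsMetric {V : Type*} (dist : V → V → ℝ) : Prop :=
  (∀ x, dist x x = 0) ∧ (∀ x y, 0 ≤ dist x y) ∧ (∀ x y, dist x y = dist y x) ∧
  (∀ x y z, dist x z ≤ dist x y + dist y z) ∧ (∀ x y, dist x y = 0 → x = y)

/-- The grid `{0,…,s-1}²` with the two corners `(0,0)` and `(s-1,s-1)` removed. -/
def cornerFreeGrid (s : ℤ) : Set (ℤ × ℤ) :=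
  {p | (0 ≤ p.1 ∧ p.1 < s ∧ 0 ≤ p.2 ∧ p.2 < s) ∧ p ≠ (0, 0) ∧ p ≠ (s - 1, s - 1)}

/-- The vertex set of the bounded-gap construction: the points of
`A = {0,…,s-1}² \ {(0,0),(s-1,s-1)}` together with two extra vertices `u₀, v₀`
(encoded by the two booleans). -/
def GapVertex (s : ℤ) : Type := ↥(cornerFreeGrid s) ⊕ Bool

/-- The distance of the bounded-gap construction: Euclidean distance on `A`,
`√(2n) = √(2s²)` between `A` and `{u₀, v₀}`, and `1` between `u₀` and `v₀`. -/
noncomputable def gapDist (s : ℤ) : GapVertex s → GapVertex s → ℝ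
  | Sum.inl x, Sum.inl y => eDist2 x.1 y.1
  | Sum.inl _, Sum.inr _ => Real.sqrt (2 * (s : ℝ) ^ 2)
  | Sum.inr _, Sum.inl _ => Real.sqrt (2 * (s : ℝ) ^ 2)
  | Sum.inr a, Sum.inr b => if a = b then 0 else 1

/-!
The distance glues two pieces of diameter at most `c = √(2n)` (the lattice set `A` and the
two-point discrete space) at constant distance `c`, which always gives a metric. For spreading, a
set `S` around `u` splits into the part on `u`'s side, already spread, and `e` vertices at distance
`c`; as `(k + e)^{3/2} - k^{3/2} ≤ 2e√(k + e)` and `√(|S| - 1) ≤ 2c`, these far vertices pay for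
the growth of the bound. A finite `T ⊆ ℤ²` is spread by a layer-cake count: at most `(2r + 1)²`
points of `T` lie within sup-distance `r` of `u`, so summing `|T| - (2r + 1)²` over
`r < ⌈√(|T| - 1) / 2⌉` bounds the distance sum from below; when `|T| ≤ 17`, that every distance
is at least `1` already suffices.
-/

open Finset

def SatisfiesSpreading {V : Type*} (d : V → V → ℝ) : Prop :=
  ∀ S : Finset V, ∀ u ∈ S, ((S.card : ℝ) - 1) ^ ((3 : ℝ) / 2) / 4 ≤ ∑ v ∈ S, d u v

lemma rpow_three_halves {x : ℝ} (hx : 0 ≤ x) : x ^ ((3 : ℝ) / 2) = x * √x := by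
  rcases hx.eq_or_lt with rfl | hx
  · simp
  · rw [show (3 : ℝ) / 2 = 1 + 1 / 2 by norm_num, Real.rpow_add hx, Real.rpow_one,
      ← Real.sqrt_eq_rpow]

lemma rpow_three_halves_add_le {x y c : ℝ} (hx : 0 ≤ x) (hy : 0 ≤ y) (hc : √(x + y) ≤ 2 * c) :
    (x + y) ^ ((3 : ℝ) / 2) / 4 ≤ x ^ ((3 : ℝ) / 2) / 4 + y * c := by
  rw [rpow_three_halves hx, rpow_three_halves (by positivity)]
  set a := √(x + y)
  set b := √x
  have ha : a ^ 2 = x + y := Real.sq_sqrt (by positivity)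
  have hb : b ^ 2 = x := Real.sq_sqrt hx
  have hba : b ≤ a := Real.sqrt_le_sqrt (by linarith)
  have hb0 : 0 ≤ b := Real.sqrt_nonneg x
  -- `a³ - b³ ≤ 2a(a² - b²)`, and `a ≤ 2c`
  nlinarith [mul_nonneg (mul_nonneg hb0 hb0) (sub_nonneg.mpr hba),
    mul_nonneg (mul_nonneg hb0 (sub_nonneg.mpr hba)) (sub_nonneg.mpr hba),
    mul_nonneg hy (sub_nonneg.mpr hc)]

lemma card_sub_one_nonneg {V : Type*} {S : Finset V} {u : V} (hu : u ∈ S) :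
    (0 : ℝ) ≤ S.card - 1 := by
  rw [sub_nonneg, Nat.one_le_cast]
  exact card_pos.mpr ⟨u, hu⟩

lemma card_sub_one_le_sum {V : Type*} {d : V → V → ℝ} {S : Finset V} {u : V} (hu : u ∈ S)
    (hself : 0 ≤ d u u) (h : ∀ v ∈ S, v ≠ u → 1 ≤ d u v) :
    (S.card : ℝ) - 1 ≤ ∑ v ∈ S, d u v := by
  classical
  rw [← add_sum_erase S _ hu, ← Nat.cast_pred (card_pos.mpr ⟨u, hu⟩), ← card_erase_of_mem hu]
  have := card_nsmul_le_sum (S.erase u) (d u) 1 fun v hv => h v (mem_of_mem_erase hv)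
    (ne_of_mem_erase hv)
  simp only [nsmul_eq_mul, mul_one] at this
  linarith

lemma spreading_bound_of_one_le_dist {V : Type*} {d : V → V → ℝ} {S : Finset V} {u : V} (hu : u ∈ S)
    (hS : S.card ≤ 17) (hself : 0 ≤ d u u) (h : ∀ v ∈ S, v ≠ u → 1 ≤ d u v) :
    ((S.card : ℝ) - 1) ^ ((3 : ℝ) / 2) / 4 ≤ ∑ v ∈ S, d u v := by
  have hk16 : (S.card : ℝ) - 1 ≤ 4 ^ 2 := by
    have : (S.card : ℝ) ≤ 17 := by exact_mod_cast hS
    linarith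
  have hsqrt : √((S.card : ℝ) - 1) ≤ 4 := by
    simpa using Real.sqrt_le_sqrt hk16
  rw [rpow_three_halves (card_sub_one_nonneg hu)]
  nlinarith [card_sub_one_le_sum hu hself h, card_sub_one_nonneg hu]

lemma spreading_bound_add_const {V : Type*} {d : V → V → ℝ} {A : Finset V} {u : V} (hu : u ∈ A)
    (hA : ((A.card : ℝ) - 1) ^ ((3 : ℝ) / 2) / 4 ≤ ∑ v ∈ A, d u v) {n : ℕ} {c : ℝ}
    (hc : √((A.card : ℝ) + n - 1) ≤ 2 * c) :
    ((A.card : ℝ) + n - 1) ^ ((3 : ℝ) / 2) / 4 ≤ ∑ v ∈ A, d u v + n * c := by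
  rw [add_sub_right_comm] at hc ⊢
  linarith [rpow_three_halves_add_le (card_sub_one_nonneg hu) (Nat.cast_nonneg n) hc]

lemma SatisfiesSpreading.comp_injective {V W : Type*} {d : W → W → ℝ} (hd : SatisfiesSpreading d)
    {f : V → W} (hf : Function.Injective f) : SatisfiesSpreading fun x y => d (f x) (f y) := by
  intro S u hu
  simpa using hd (S.map ⟨f, hf⟩) (f u) (mem_map_of_mem _ hu)

lemma IsMetric.comp_injective {V W : Type*} {d : W → W → ℝ} (hd : IsMetric d)
    {f : V → W} (hf : Function.Injective f) : IsMetric fun x y => d (f x) (f y) :=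
  ⟨fun _ => hd.1 _, fun _ _ => hd.2.1 _ _, fun _ _ => hd.2.2.1 _ _,
    fun _ _ _ => hd.2.2.2.1 _ _ _, fun _ _ h => hf (hd.2.2.2.2 _ _ h)⟩

lemma isMetric_dist (M : Type*) [MetricSpace M] : IsMetric (dist : M → M → ℝ) :=
  ⟨dist_self, fun _ _ => dist_nonneg, dist_comm, dist_triangle, fun _ _ => dist_eq_zero.mp⟩

lemma isMetric_discrete (β : Type*) [DecidableEq β] :
    IsMetric fun a b : β => if a = b then (0 : ℝ) else 1 := by
  refine ⟨fun _ => if_pos rfl, fun a b => ?_, fun a b => ?_, fun a b c => ?_, fun a b => ?_⟩ <;>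
    dsimp only
  · split_ifs <;> norm_num
  · simp only [eq_comm]
  · split_ifs <;> simp_all
  · split_ifs <;> simp_all

lemma satisfiesSpreading_discrete (β : Type*) [Fintype β] [DecidableEq β]
    (hβ : Fintype.card β ≤ 17) : SatisfiesSpreading fun a b : β => if a = b then (0 : ℝ) else 1 :=
  fun S u hu => spreading_bound_of_one_le_dist (d := fun a b : β => if a = b then (0 : ℝ) else 1) hu
    ((card_le_univ S).trans hβ) (by simp) fun v _ hv => by simp [Ne.symm hv]

section Glue

variable {α β : Type*} {dα : α → α → ℝ} {dβ : β → β → ℝ} {c : ℝ}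

def glueDist (dα : α → α → ℝ) (dβ : β → β → ℝ) (c : ℝ) : α ⊕ β → α ⊕ β → ℝ
  | .inl x, .inl y => dα x y
  | .inl _, .inr _ => c
  | .inr _, .inl _ => c
  | .inr a, .inr b => dβ a b

lemma isMetric_glueDist (hα : IsMetric dα) (hβ : IsMetric dβ) (hc : 0 < c)
    (hα_le : ∀ x y, dα x y ≤ 2 * c) (hβ_le : ∀ a b, dβ a b ≤ 2 * c) :
    IsMetric (glueDist dα dβ c) := by
  obtain ⟨hα0, hαnn, hαsymm, hαtri, hαeq⟩ := hα
  obtain ⟨hβ0, hβnn, hβsymm, hβtri, hβeq⟩ := hβ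
  refine ⟨?_, ?_, ?_, ?_, ?_⟩
  · rintro (x | a) <;> simp [glueDist, hα0, hβ0]
  · rintro (x | a) (y | b) <;> simp [glueDist, hαnn, hβnn, hc.le]
  · rintro (x | a) (y | b) <;> simp [glueDist, hαsymm, hβsymm]
  · rintro (x | a) (y | b) (z | e) <;> simp only [glueDist]
    · exact hαtri x y z
    · linarith [hαnn x y]
    · linarith [hα_le x z]
    · linarith [hβnn b e]
    · linarith [hαnn y z]
    · linarith [hβ_le a e]
    · linarith [hβnn a b]
    · exact hβtri a b e
  · rintro (x | a) (y | b) h <;> simp only [glueDist] at h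
    · rw [hαeq x y h]
    · exact absurd h hc.ne'
    · exact absurd h hc.ne'
    · rw [hβeq a b h]

lemma satisfiesSpreading_glueDist (hα : SatisfiesSpreading dα) (hβ : SatisfiesSpreading dβ)
    (hc : 0 ≤ c) (hcard : ∀ S : Finset (α ⊕ β), (S.card : ℝ) ≤ 4 * c ^ 2 + 1) :
    SatisfiesSpreading (glueDist dα dβ c) := by
  intro S u hu
  have hS : √((S.card : ℝ) - 1) ≤ 2 * c :=
    Real.sqrt_le_iff.mpr ⟨by positivity, by linarith [hcard S]⟩
  rw [← card_toLeft_add_card_toRight, sum_sum_eq_sum_toLeft_add_sum_toRight] at *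
  push_cast at hS ⊢
  rcases u with x | a
  · have hx : x ∈ S.toLeft := mem_toLeft.mpr hu
    simpa [glueDist] using spreading_bound_add_const hx (hα _ x hx) hS
  · have ha : a ∈ S.toRight := mem_toRight.mpr hu
    simpa [glueDist, add_comm] using
      spreading_bound_add_const ha (hβ _ a ha) (by rwa [add_comm])

end Glue

def supDist (u v : ℤ × ℤ) : ℕ := max (v - u).1.natAbs (v - u).2.natAbs

lemma supDist_le_eDist2 (u v : ℤ × ℤ) : (supDist u v : ℝ) ≤ eDist2 u v := by
  have h1 : |(u.1 : ℝ) - v.1| ≤ eDist2 u v := Real.abs_le_sqrt (by nlinarith)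
  have h2 : |(u.2 : ℝ) - v.2| ≤ eDist2 u v := Real.abs_le_sqrt (by nlinarith)
  rw [abs_sub_comm] at h1 h2
  simpa [supDist, Nat.cast_natAbs] using And.intro h1 h2

lemma one_le_eDist2 {u v : ℤ × ℤ} (h : u ≠ v) : 1 ≤ eDist2 u v := by
  refine le_trans ?_ (supDist_le_eDist2 u v)
  have : supDist u v ≠ 0 := by
    simp only [supDist, ne_eq, Nat.max_eq_zero_iff, Int.natAbs_eq_zero, Prod.fst_sub,
      Prod.snd_sub, sub_eq_zero, not_and]
    exact fun h1 h2 => h (Prod.ext h1.symm h2.symm)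
  exact_mod_cast Nat.one_le_iff_ne_zero.mpr this

lemma card_filter_supDist_le (u : ℤ × ℤ) (T : Finset (ℤ × ℤ)) (r : ℕ) :
    (T.filter fun v => supDist u v ≤ r).card ≤ (2 * r + 1) ^ 2 := by
  calc (T.filter fun v => supDist u v ≤ r).card ≤ (Icc (-r : ℤ × ℤ) r).card := by
        refine card_le_card_of_injOn (· - u) (fun v hv => ?_)
          fun v _ w _ h => sub_left_injective h
        rw [mem_coe, mem_filter, supDist] at hv
        simp only [coe_Icc, Set.mem_Icc, Prod.le_def, Prod.fst_neg, Prod.snd_neg,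
          Prod.fst_natCast, Prod.snd_natCast]
        omega
    _ = (2 * r + 1) ^ 2 := by
        simp only [card_Icc_prod, Int.card_Icc, Prod.fst_neg, Prod.snd_neg, Prod.fst_natCast,
          Prod.snd_natCast]
        rw [show ((r : ℤ) + 1 - -r).toNat = 2 * r + 1 by omega, sq]

lemma sum_range_card_filter_lt_le {ι : Type*} (T : Finset ι) (f : ι → ℕ) (R : ℕ) :
    ∑ r ∈ range R, (T.filter fun v => r < f v).card ≤ ∑ v ∈ T, f v := by
  simp only [card_filter]
  rw [sum_comm]
  refine sum_le_sum fun v _ => ?_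
  rw [← card_filter]
  calc ((range R).filter fun r => r < f v).card ≤ (range (f v)).card :=
        card_le_card fun r hr => mem_range.mpr (mem_filter.mp hr).2
    _ = f v := card_range _

lemma sum_range_card_sub_sq_le_sum_supDist (u : ℤ × ℤ) (T : Finset (ℤ × ℤ)) (R : ℕ) :
    ∑ r ∈ range R, ((T.card : ℝ) - (2 * r + 1) ^ 2) ≤ ∑ v ∈ T, (supDist u v : ℝ) := by
  have hfar (r : ℕ) :
      (T.card : ℝ) - (2 * r + 1) ^ 2 ≤ (T.filter fun v => r < supDist u v).card := by
    have hsplit := card_filter_add_card_filter_not (s := T) (fun v => r < supDist u v)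
    have hnear := card_filter_supDist_le u T r
    simp only [not_lt] at hsplit
    have : (T.card : ℝ) ≤ (T.filter fun v => r < supDist u v).card + (2 * r + 1) ^ 2 := by
      exact_mod_cast hsplit ▸ Nat.add_le_add_left hnear _
    linarith
  calc _ ≤ ∑ r ∈ range R, ((T.filter fun v => r < supDist u v).card : ℝ) :=
        sum_le_sum fun r _ => hfar r
    _ ≤ ∑ v ∈ T, (supDist u v : ℝ) := by exact_mod_cast sum_range_card_filter_lt_le T _ R

lemma sum_range_sub_odd_sq (x : ℝ) (R : ℕ) :
    ∑ r ∈ range R, (x - (2 * r + 1) ^ 2) = R * (3 * x + 1 - 4 * R ^ 2) / 3 := by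
  induction R with
  | zero => simp
  | succ R ih => rw [sum_range_succ, ih]; push_cast; ring

lemma rpow_three_halves_le_sum_range {m : ℝ} (hm : 16 ≤ m) :
    m ^ ((3 : ℝ) / 2) / 4 ≤ ∑ r ∈ range ⌈√m / 2⌉₊, (m + 1 - (2 * r + 1) ^ 2) := by
  rw [sum_range_sub_odd_sq, rpow_three_halves (by linarith)]
  set t := √m
  have ht : t ^ 2 = m := Real.sq_sqrt (by linarith)
  have ht4 : 4 ≤ t := Real.le_sqrt_of_sq_le (by linarith)
  obtain ⟨d, hd, hd0, hd1⟩ : ∃ d : ℝ, (⌈t / 2⌉₊ : ℝ) = t / 2 + d ∧ 0 ≤ d ∧ d ≤ 1 :=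
    ⟨_, by ring, sub_nonneg.mpr (Nat.le_ceil _),
      by linarith [Nat.ceil_lt_add_one (by positivity : 0 ≤ t / 2)]⟩
  rw [hd, ← ht]
  -- the difference is `t(t² - 16)/4 + 6t(1 - d²) + 4d(1 - d²)`
  nlinarith [mul_nonneg (by linarith : (0 : ℝ) ≤ t) (by nlinarith : (0 : ℝ) ≤ t ^ 2 - 16),
    mul_nonneg (by linarith : (0 : ℝ) ≤ t) (by nlinarith : (0 : ℝ) ≤ 1 - d ^ 2),
    mul_nonneg hd0 (by nlinarith : (0 : ℝ) ≤ 1 - d ^ 2)]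

theorem satisfiesSpreading_eDist2 : SatisfiesSpreading eDist2 := by
  intro T u hu
  rcases le_or_gt T.card 17 with hsmall | hlarge
  · exact spreading_bound_of_one_le_dist hu hsmall (Real.sqrt_nonneg _)
      fun v _ hv => one_le_eDist2 (Ne.symm hv)
  · have hm : (16 : ℝ) ≤ T.card - 1 := by
      have : (17 : ℝ) < T.card := by exact_mod_cast hlarge
      linarith
    calc _ ≤ _ := rpow_three_halves_le_sum_range hm
      _ ≤ ∑ v ∈ T, (supDist u v : ℝ) := by
        simpa only [sub_add_cancel] using sum_range_card_sub_sq_le_sum_supDist u T _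
      _ ≤ ∑ v ∈ T, eDist2 u v := sum_le_sum fun v _ => supDist_le_eDist2 u v

lemma isMetric_eDist2 : IsMetric eDist2 := by
  have hinj : Function.Injective fun p : ℤ × ℤ => (⟨p.1, p.2⟩ : ℂ) := fun p q h => by
    simp only [Complex.mk.injEq, Int.cast_inj] at h
    exact Prod.ext h.1 h.2
  convert (isMetric_dist ℂ).comp_injective hinj using 1
  funext p q
  rw [Complex.dist_eq_re_im, eDist2]

section Grid

variable {s : ℤ}

lemma eDist2_le_of_mem_cornerFreeGrid {p q : ℤ × ℤ} (hp : p ∈ cornerFreeGrid s)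
    (hq : q ∈ cornerFreeGrid s) : eDist2 p q ≤ √(2 * (s : ℝ) ^ 2) := by
  obtain ⟨⟨hp1, hp2, hp3, hp4⟩, -⟩ := hp
  obtain ⟨⟨hq1, hq2, hq3, hq4⟩, -⟩ := hq
  have h : (p.1 - q.1) ^ 2 + (p.2 - q.2) ^ 2 ≤ 2 * s ^ 2 := by nlinarith
  exact Real.sqrt_le_sqrt (by exact_mod_cast h)

lemma card_le_sq_of_cornerFreeGrid (hs : 0 ≤ s) (A : Finset (cornerFreeGrid s)) :
    (A.card : ℝ) ≤ s ^ 2 := by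
  have hsub : A.map (Function.Embedding.subtype _) ⊆ Icc (0, 0) (s - 1, s - 1) := by
    intro p hp
    obtain ⟨⟨x, ⟨hx, -⟩⟩, -, rfl⟩ := mem_map.mp hp
    simp only [Function.Embedding.subtype_apply, mem_Icc, Prod.le_def]
    omega
  have := card_le_card hsub
  rw [card_map, card_Icc_prod, Int.card_Icc, sub_add_cancel, sub_zero, ← sq] at this
  have hcast : ((s.toNat : ℕ) : ℝ) = s := by exact_mod_cast Int.toNat_of_nonneg hs
  calc (A.card : ℝ) ≤ (s.toNat ^ 2 : ℕ) := by exact_mod_cast this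
    _ = s ^ 2 := by push_cast; rw [hcast]

end Grid

/-- Metric feasibility of the bounded-gap construction: for every `s ≥ 2` (with
`n = s²`), `gapDist s` is a metric on `V = A ⊕ {u₀, v₀}` and it satisfies the
2-dimensional spreading constraints. -/
theorem gap_construction_feasible (s : ℤ) (hs : 2 ≤ s) :
    IsMetric (gapDist s) ∧
    ∀ S : Finset (GapVertex s), ∀ u ∈ S,
      ((S.card : ℝ) - 1) ^ ((3 : ℝ) / 2) / 4 ≤ ∑ v ∈ S, gapDist s u v := by
  set c := √(2 * (s : ℝ) ^ 2)
  have hs' : (2 : ℝ) ≤ s := by exact_mod_cast hs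
  have hc : c ^ 2 = 2 * s ^ 2 := Real.sq_sqrt (by positivity)
  have hc1 : 1 ≤ c := Real.le_sqrt_of_sq_le (by nlinarith)
  have hglue : gapDist s = glueDist (fun x y : cornerFreeGrid s => eDist2 x y)
      (fun a b : Bool => if a = b then 0 else 1) c := by
    funext x y
    cases x <;> cases y <;> rfl
  rw [hglue]
  refine ⟨isMetric_glueDist (isMetric_eDist2.comp_injective Subtype.val_injective)
    (isMetric_discrete Bool) (by positivity) (fun x y => ?_) (fun a b => ?_),
    satisfiesSpreading_glueDist (satisfiesSpreading_eDist2.comp_injective Subtype.val_injective)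
      (satisfiesSpreading_discrete Bool (by simp)) (by positivity) fun S => ?_⟩
  · linarith [eDist2_le_of_mem_cornerFreeGrid x.2 y.2]
  · split_ifs <;> linarith
  · have hL := card_le_sq_of_cornerFreeGrid (by omega) S.toLeft
    have hR : (S.toRight.card : ℝ) ≤ 2 := by exact_mod_cast card_le_univ S.toRight
    rw [← card_toLeft_add_card_toRight]
    push_cast
    nlinarith
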